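/- arXiv:1302.6687 — 2 statements merged into one kernel-verified Lean document; each statement's English description precedes it below -/
import Mathlib

section
/- In the lattice B(r) with D = -K satisfying D² ≥ 1, if F is a class with D·F = 2 and F² ≥ 2 even, then either 2F is numerically proportional to D (precisely, (F²)·D - 2F = 0) or ((F²)·D - 2F)² < 0; moreover ((F²)·D - 2F)² < 0 together with F² ≥ 2 even forces F² ∈ {2, 4} when D² ∈ {1, 2}, with F² = 4 only possible when D² = 1. -/
/-- Intersection product on the lattice `B(r) = Z⟨H, Q₁, …, Q_r⟩`:
a class `aH + Σ cᵢ Qᵢ` is represented as the pair `(a, c)`, and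
`H² = 1`, `Qᵢ·Qⱼ = -δᵢⱼ`, `H·Qᵢ = 0`. -/
def dotB {r : ℕ} (x y : ℤ × (Fin r → ℤ)) : ℤ :=
  x.1 * y.1 - ∑ i, x.2 i * y.2 i

/-- The canonical class `K = -3H + Q₁ + … + Q_r` of `B(r)`. -/
def KB (r : ℕ) : ℤ × (Fin r → ℤ) := (-3, fun _ => 1)

lemma dotB_comm {r : ℕ} (x y : ℤ × (Fin r → ℤ)) : dotB x y = dotB y x := by
  simp [dotB, mul_comm]

lemma dotB_smul_left {r : ℕ} (n : ℤ) (x y : ℤ × (Fin r → ℤ)) :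
    dotB (n • x) y = n * dotB x y := by
  simp [dotB, Finset.mul_sum, mul_sub, mul_assoc]

lemma dotB_sub_left {r : ℕ} (x y z : ℤ × (Fin r → ℤ)) :
    dotB (x - y) z = dotB x z - dotB y z := by
  simp [dotB, sub_mul, Finset.sum_sub_distrib]
  ring

lemma dotB_sub_right {r : ℕ} (x y z : ℤ × (Fin r → ℤ)) :
    dotB x (y - z) = dotB x y - dotB x z := by
  rw [dotB_comm, dotB_sub_left, dotB_comm y x, dotB_comm z x]

lemma dotB_smul_right {r : ℕ} (n : ℤ) (x y : ℤ × (Fin r → ℤ)) :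
    dotB x (n • y) = n * dotB x y := by
  rw [dotB_comm, dotB_smul_left, dotB_comm]

lemma two_smul_eq {r : ℕ} (F : ℤ × (Fin r → ℤ)) : (2 : ℕ) • F = (2 : ℤ) • F := by
  exact_mod_cast (Nat.cast_smul_eq_nsmul ℤ 2 F).symm

lemma hodge {r : ℕ} (hD : 1 ≤ dotB (-(KB r)) (-(KB r))) (x : ℤ × (Fin r → ℤ))
    (hx : dotB (-(KB r)) x = 0) : dotB x x ≤ 0 ∧ (dotB x x = 0 → x = 0) := by
  have hr : (r : ℤ) ≤ 8 := by
    have h9r : dotB (-(KB r)) (-(KB r)) = 9 - r := by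
      simp [dotB, KB]
    omega
  have hS : 3 * x.1 + ∑ i, x.2 i = 0 := by
    have h := hx
    simp [dotB, KB] at h
    linarith
  have hCS : (∑ i, x.2 i * 1) ^ 2 ≤ (∑ i, x.2 i ^ 2) * ∑ i : Fin r, (1:ℤ) ^ 2 :=
    Finset.sum_mul_sq_le_sq_mul_sq _ _ _
  have hT0 : 0 ≤ ∑ i, x.2 i ^ 2 := Finset.sum_nonneg fun i _ => sq_nonneg _
  simp only [mul_one, one_pow, Finset.sum_const, Finset.card_univ, Fintype.card_fin,
    nsmul_eq_mul] at hCS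
  have hxx : dotB x x = x.1 ^ 2 - ∑ i, x.2 i ^ 2 := by
    simp [dotB, sq]
  have h9 : 9 * x.1 ^ 2 ≤ (∑ i, x.2 i ^ 2) * 8 := by
    have hSe : ∑ i, x.2 i = -(3 * x.1) := by linarith
    have : (∑ i, x.2 i) ^ 2 = 9 * x.1 ^ 2 := by rw [hSe]; ring
    nlinarith [hCS, hT0, hr, mul_nonneg hT0 (by linarith : (0:ℤ) ≤ 8 - (r:ℤ))]
  constructor
  · nlinarith [hxx, h9, sq_nonneg x.1]
  · intro h0
    have hb : x.1 = 0 := by nlinarith [hxx, h9]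
    have hT : ∑ i, x.2 i ^ 2 = 0 := by nlinarith [hxx]
    have he : ∀ i ∈ Finset.univ, x.2 i ^ 2 = 0 :=
      (Finset.sum_eq_zero_iff_of_nonneg fun i _ => sq_nonneg _).mp hT
    ext i
    · exact hb
    · exact pow_eq_zero_iff (by norm_num) |>.mp (he i (Finset.mem_univ i))

/-- In `B(r)` with `D = -K`, `D² ≥ 1`: if `D·F = 2` and `F² ≥ 2` is even then
either `(F²)·D - 2F = 0` or `((F²)·D - 2F)² < 0`; moreover together with
`D² ∈ {1,2}` the latter forces `F² ∈ {2,4}`, with `F² = 4` only if `D² = 1`. -/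
theorem stmt4 (r : ℕ) (F : ℤ × (Fin r → ℤ))
    (hD : 1 ≤ dotB (-(KB r)) (-(KB r)))
    (hDF : dotB (-(KB r)) F = 2)
    (hF2 : 2 ≤ dotB F F) (hFe : Even (dotB F F)) :
    ((dotB F F) • (-(KB r)) - 2 • F = 0 ∨
      dotB ((dotB F F) • (-(KB r)) - 2 • F) ((dotB F F) • (-(KB r)) - 2 • F) < 0) ∧
    (dotB ((dotB F F) • (-(KB r)) - 2 • F) ((dotB F F) • (-(KB r)) - 2 • F) < 0 →
      (dotB (-(KB r)) (-(KB r)) = 1 ∨ dotB (-(KB r)) (-(KB r)) = 2) →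
      (dotB F F = 2 ∨ dotB F F = 4) ∧
      (dotB F F = 4 → dotB (-(KB r)) (-(KB r)) = 1)) := by
  set D := -(KB r) with hDdef
  set d := dotB D D with hd
  set f := dotB F F with hf
  set C := f • D - 2 • F with hC
  have hC' : C = f • D - (2:ℤ) • F := by rw [hC, two_smul_eq]
  have hFD : dotB F D = 2 := by rw [dotB_comm]; exact hDF
  have hDC : dotB D C = f * d - 4 := by
    simp only [hC', dotB_sub_right, dotB_smul_right, hDF, ← hd]
    ring
  have hCC : dotB C C = f * (f * d - 4) := by
    simp only [hC', dotB_sub_left, dotB_sub_right, dotB_smul_left, dotB_smul_right,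
      hDF, hFD, ← hd, ← hf]
    ring
  -- auxiliary class for Cauchy–Schwarz
  set x := d • C - (f * d - 4) • D with hx
  have hCD : dotB C D = f * d - 4 := by rw [dotB_comm]; exact hDC
  have hxD : dotB D x = 0 := by
    simp only [hx, dotB_sub_right, dotB_smul_right, hDC, ← hd]
    ring
  have hxx : dotB x x = d * (d * (f * (f * d - 4)) - (f * d - 4) ^ 2) := by
    simp only [hx, dotB_sub_left, dotB_sub_right, dotB_smul_left, dotB_smul_right,
      hCC, hDC, hCD, ← hd]
    ring
  have hle := (hodge hD x hxD).1
  rw [hxx] at hle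
  have hfd : f * d ≤ 4 := by nlinarith
  refine ⟨?_, ?_⟩
  · rcases lt_or_eq_of_le hfd with h | h
    · right; rw [hCC]; nlinarith
    · left
      have hDC0 : dotB D C = 0 := by rw [hDC]; omega
      have hCC0 : dotB C C = 0 := by rw [hCC]; rw [h]; ring
      exact (hodge hD C hDC0).2 hCC0
  · intro hneg hd12
    rw [hCC] at hneg
    obtain ⟨k, hk⟩ := hFe
    have hf2 : f = 2 := by
      rcases hd12 with h1 | h1 <;> rw [h1] at hneg
      · have : f < 4 := by nlinarith
        omega
      · exfalso; nlinarith
    exact ⟨Or.inl hf2, fun h4 => by omega⟩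
end

section
/- In P(r), suppose a > 0, a + r even, D = H + ((a-r+2)/2)F, B = H - rF, K = -2H + (r-2)F, and T = αH + βF satisfies D·T = 2, T·B ≥ 0, T² ≥ 0, and p_a(T) = (T² + T·K)/2 + 1 ≥ 0. Then α > 0, β ≥ 0, and a + r ≤ 2; consequently (r, a) ∈ {(0, 2), (1, 1)} and T = H. -/
/-- Intersection product on the lattice `P(r) = Z⟨H, F⟩` with `H² = r`,
`H·F = 1`, `F² = 0`; a class `aH + bF` is represented as the pair `(a, b)`. -/
def dotP (r : ℤ) (x y : ℤ × ℤ) : ℤ :=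
  x.1 * y.1 * r + x.1 * y.2 + x.2 * y.1

/-- The canonical class `K = -2H + (r-2)F` of `P(r)`. -/
def KP (r : ℤ) : ℤ × ℤ := (-2, r - 2)

/-- In `P(r)` (`r ≥ 0`), with `a > 0`, `a + r` even, `D = H + ((a-r+2)/2)F`
(written `(1, k)` with `2k = a - r + 2`), `B = H - rF`, `K = -2H + (r-2)F`:
if `T = αH + βF` satisfies `D·T = 2`, `T·B ≥ 0`, `T² ≥ 0` and
`p_a(T) = (T² + T·K)/2 + 1 ≥ 0`, then `α > 0`, `β ≥ 0`, `a + r ≤ 2`;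
consequently `(r, a) ∈ {(0,2), (1,1)}` and `T = H`. -/
theorem stmt13 (r a k α β : ℤ) (hr : 0 ≤ r) (ha : 0 < a)
    (hk : 2 * k = a - r + 2)
    (hDT : dotP r ((1 : ℤ), k) (α, β) = 2)
    (hTB : 0 ≤ dotP r (α, β) ((1 : ℤ), -r))
    (hT2 : 0 ≤ dotP r (α, β) (α, β))
    (hpa : 0 ≤ (dotP r (α, β) (α, β) + dotP r (α, β) (KP r)) / 2 + 1) :
    0 < α ∧ 0 ≤ β ∧ a + r ≤ 2 ∧
    ((r = 0 ∧ a = 2) ∨ (r = 1 ∧ a = 1)) ∧ (α, β) = ((1 : ℤ), (0 : ℤ)) := by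
  simp only [dotP, KP] at hDT hTB hT2 hpa
  -- T·B = β
  have hβ : 0 ≤ β := by linarith
  -- the numerator of p_a is even
  obtain ⟨c, hc⟩ : Even ((α - 1) * α) := by simpa using Int.even_mul_succ_self (α - 1)
  set m : ℤ := r * c + α * β - α - β with hm
  have hN : α * α * r + α * β + β * α + (α * -2 * r + α * (r - 2) + β * -2) = 2 * m := by
    rw [hm]; linear_combination r * hc
  rw [hN, Int.mul_ediv_cancel_left _ two_ne_zero] at hpa
  -- key: T² = 4α - α²(a+2)
  have hkey : 0 ≤ 4 * α - α * α * (a + 2) := by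
    have h : α * α * r + α * β + β * α = 4 * α - α * α * (a + 2) := by
      linear_combination 2 * α * hDT - α * α * hk
    linarith [h ▸ hT2]
  -- α ≠ 0, using p_a(2F) = -1 < 0
  have hα0 : α ≠ 0 := by
    rintro rfl
    have hc0 : c = 0 := by linarith [hc]
    simp only [hc0] at hm
    omega
  have hαpos : 0 < α := by
    rcases lt_or_gt_of_ne hα0 with h | h
    · exfalso
      nlinarith [mul_nonneg (by linarith : (0:ℤ) ≤ -α) (by linarith : (0:ℤ) ≤ -α)]
    · exact h
  have hα2 : α < 2 := by
    by_contra h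
    push_neg at h
    nlinarith [mul_le_mul_of_nonneg_right h (by linarith : (0:ℤ) ≤ α)]
  have hα1 : α = 1 := by omega
  subst hα1
  -- now hDT : r + β + k = 2 (up to form); finish linearly
  have : 1 * 1 * r + 1 * β + k * 1 = 2 := hDT
  refine ⟨one_pos, hβ, by omega, by omega, ?_⟩
  have : β = 0 := by omega
  simp [this]
end
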